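/- arXiv:2307.10066 — 3 statements merged into one kernel-verified Lean document; each statement's English description precedes it below -/
import Mathlib

section
/- Assume K has symmetric support and δ ≤ 1/2. Then log(1/p) ≤ 3 · diam(𝒳) · log(1/δ), where p = min_x π(x) and δ is the smallest non-zero entry of K. -/
open scoped Classical

noncomputable section

/-- `n`-th power of a kernel `K` on a finite set. -/
def matPow {X : Type*} [Fintype X] [DecidableEq X] (K : X → X → ℝ) : ℕ → X → X → ℝ
  | 0 => fun x y => if x = y then 1 else 0
  | n + 1 => fun x y => ∑ z, matPow K n x z * K z y

/-- `K` is a stochastic matrix with entries in `[0,1]` and rows summing to `1`. -/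
def IsStochastic {X : Type*} [Fintype X] (K : X → X → ℝ) : Prop :=
  (∀ x y, 0 ≤ K x y ∧ K x y ≤ 1) ∧ ∀ x, ∑ y, K x y = 1

/-- Irreducibility: any state can be reached from any state. -/
def IsIrreducibleMatrix {X : Type*} [Fintype X] [DecidableEq X] (K : X → X → ℝ) : Prop :=
  ∀ x y, ∃ n : ℕ, 0 < matPow K n x y

/-- `π` is the (positive) stationary probability vector of `K`. -/
def IsStationaryVec {X : Type*} [Fintype X] (K : X → X → ℝ) (π : X → ℝ) : Prop :=
  (∀ x, 0 < π x) ∧ (∑ x, π x = 1) ∧ ∀ y, ∑ x, π x * K x y = π y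

/-- A probability vector on a finite set. -/
def IsProbVector {X : Type*} [Fintype X] (μ : X → ℝ) : Prop :=
  (∀ x, 0 ≤ μ x) ∧ ∑ x, μ x = 1

/-- Continuous-time heat kernel `P_t(x,y) = e^{-t} ∑ t^n/n! Kⁿ(x,y)`. -/
def heatKernel {X : Type*} [Fintype X] [DecidableEq X] (K : X → X → ℝ) (t : ℝ) (x y : X) : ℝ :=
  Real.exp (-t) * ∑' n : ℕ, t ^ n / (Nat.factorial n : ℝ) * matPow K n x y

/-- Total variation distance between two vectors. -/
def dTV {X : Type*} [Fintype X] (μ ν : X → ℝ) : ℝ := (∑ x, |μ x - ν x|) / 2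

/-- Relative entropy (Kullback–Leibler divergence). -/
def dKL {X : Type*} [Fintype X] (μ ν : X → ℝ) : ℝ := ∑ x, μ x * Real.log (μ x / ν x)

/-- Varentropy. -/
def varKL {X : Type*} [Fintype X] (μ ν : X → ℝ) : ℝ :=
  ∑ x, μ x * (Real.log (μ x / ν x) - dKL μ ν) ^ 2

/-- Worst-case total variation distance to equilibrium at time `t`. -/
def worstTV {X : Type*} [Fintype X] [DecidableEq X] (K : X → X → ℝ) (π : X → ℝ) (t : ℝ) : ℝ :=
  sSup {v : ℝ | ∃ o : X, v = dTV (heatKernel K t o) π}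

/-- Worst-case relative entropy to equilibrium at time `t`. -/
def worstKL {X : Type*} [Fintype X] [DecidableEq X] (K : X → X → ℝ) (π : X → ℝ) (t : ℝ) : ℝ :=
  sSup {v : ℝ | ∃ o : X, v = dKL (heatKernel K t o) π}

/-- Worst-case varentropy at time `t`. -/
def worstVar {X : Type*} [Fintype X] [DecidableEq X] (K : X → X → ℝ) (π : X → ℝ) (t : ℝ) : ℝ :=
  sSup {v : ℝ | ∃ o : X, v = varKL (heatKernel K t o) π}

/-- Mixing time: first time the worst-case TV distance drops below `ε`. -/
def mixingTime {X : Type*} [Fintype X] [DecidableEq X] (K : X → X → ℝ) (π : X → ℝ) (ε : ℝ) : ℝ :=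
  sInf {t : ℝ | 0 ≤ t ∧ worstTV K π t ≤ ε}

/-- Variance of `f` with respect to `π`. -/
def varPi {X : Type*} [Fintype X] (π f : X → ℝ) : ℝ :=
  ∑ x, π x * (f x - ∑ y, π y * f y) ^ 2

/-- Poincaré constant: the largest `γ` with `γ·Var_π(f) ≤ (1/2)∑ π(x)K(x,y)(f(x)-f(y))²`. -/
def poincare {X : Type*} [Fintype X] (K : X → X → ℝ) (π : X → ℝ) : ℝ :=
  sSup {γ : ℝ | ∀ f : X → ℝ, γ * varPi π f ≤ (∑ x, ∑ y, π x * K x y * (f x - f y) ^ 2) / 2}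

/-- Smallest non-zero entry of `K`. -/
def minEntry {X : Type*} [Fintype X] (K : X → X → ℝ) : ℝ :=
  sInf {v : ℝ | (∃ x y, v = K x y) ∧ 0 < v}

/-- Smallest stationary probability `p = min_x π(x)`. -/
def statMin {X : Type*} [Fintype X] (π : X → ℝ) : ℝ :=
  sInf {v : ℝ | ∃ x, v = π x}

/-- The support of `K` is symmetric. -/
def SymmSupport {X : Type*} (K : X → X → ℝ) : Prop :=
  ∀ x y, 0 < K x y → 0 < K y x

/-- Graph distance associated with the support of `K`. -/
def mdist {X : Type*} [Fintype X] [DecidableEq X] (K : X → X → ℝ) (x y : X) : ℕ :=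
  sInf {n : ℕ | 0 < matPow K n x y}

/-- Diameter of the state space for the distance `mdist`. -/
def mdiam {X : Type*} [Fintype X] [DecidableEq X] (K : X → X → ℝ) : ℕ :=
  Finset.sup Finset.univ fun p : X × X => mdist K p.1 p.2

/-- Lipschitz norm of `f` with respect to `mdist`. -/
def lipNorm {X : Type*} [Fintype X] [DecidableEq X] (K : X → X → ℝ) (f : X → ℝ) : ℝ :=
  sSup {v : ℝ | ∃ x y, x ≠ y ∧ v = |f x - f y| / (mdist K x y : ℝ)}

/-!
Let `D` be the diameter and `δ` the smallest non-zero entry of `K`. Some state `x` has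
`π x ≥ 1 / |X|`, and every state `y` is reached from `x` by a path of length `n ≤ D` of
`K`-probability at least `δ ^ n`, so stationarity gives `π y ≥ π x * δ ^ D ≥ δ ^ D / |X|`.
A row of `K` has at most `1 / δ` non-zero entries, so a ball of radius `k` has at most
`(1 + 1 / δ) ^ k ≤ δ ^ (-2k)` points once `δ ≤ 1 / 2`; hence `|X| ≤ δ ^ (-2D)` and
`statMin π ≥ δ ^ (3D)`.
-/

open Finset

section MinEntry

variable {X : Type*} [Fintype X] {K : X → X → ℝ}

lemma finite_setOf_pos_entry (K : X → X → ℝ) :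
    {v : ℝ | (∃ x y, v = K x y) ∧ 0 < v}.Finite :=
  (Set.finite_range fun p : X × X => K p.1 p.2).subset fun _ ⟨⟨x, y, hv⟩, _⟩ => ⟨(x, y), hv.symm⟩

lemma minEntry_le_of_pos {x y : X} (h : 0 < K x y) : minEntry K ≤ K x y :=
  csInf_le (finite_setOf_pos_entry K).bddBelow ⟨⟨x, y, rfl⟩, h⟩

lemma IsStochastic.exists_pos [Nonempty X] (hK : IsStochastic K) : ∃ x y, 0 < K x y := by
  obtain ⟨x⟩ := ‹Nonempty X›
  obtain ⟨y, -, hy⟩ : ∃ y ∈ univ, 0 < K x y :=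
    (sum_pos_iff_of_nonneg fun y _ => (hK.1 x y).1).1 (by rw [hK.2 x]; exact one_pos)
  exact ⟨x, y, hy⟩

lemma minEntry_pos [Nonempty X] (hK : IsStochastic K) : 0 < minEntry K := by
  obtain ⟨x, y, hy⟩ := hK.exists_pos
  exact (Set.Nonempty.csInf_mem (s := {v : ℝ | (∃ x y, v = K x y) ∧ 0 < v}) ⟨_, ⟨x, y, rfl⟩, hy⟩
    (finite_setOf_pos_entry K)).2

lemma minEntry_le_one [Nonempty X] (hK : IsStochastic K) : minEntry K ≤ 1 := by
  obtain ⟨x, y, hy⟩ := hK.exists_pos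
  exact (minEntry_le_of_pos hy).trans (hK.1 x y).2

lemma card_filter_pos_le_inv_minEntry (hK : IsStochastic K) (x : X) :
    (#{y | 0 < K x y} : ℝ) ≤ 1 / minEntry K := by
  have : Nonempty X := ⟨x⟩
  rw [le_div_iff₀ (minEntry_pos hK)]
  calc (#{y | 0 < K x y} : ℝ) * minEntry K = #{y | 0 < K x y} • minEntry K :=
        (nsmul_eq_mul _ _).symm
    _ ≤ ∑ y ∈ {y | 0 < K x y}, K x y :=
        card_nsmul_le_sum _ _ _ fun y hy => minEntry_le_of_pos (mem_filter.1 hy).2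
    _ ≤ ∑ y, K x y := sum_le_sum_of_subset_of_nonneg (filter_subset _ _)
        fun y _ _ => (hK.1 x y).1
    _ = 1 := hK.2 x

end MinEntry

lemma IsStationaryVec.nonempty {X : Type*} [Fintype X] {K : X → X → ℝ} {π : X → ℝ}
    (hπ : IsStationaryVec K π) : Nonempty X :=
  univ_nonempty_iff.1 (nonempty_of_sum_ne_zero (hπ.2.1.symm ▸ one_ne_zero))

lemma exists_statMin_eq {X : Type*} [Fintype X] [Nonempty X] (π : X → ℝ) :
    ∃ x, statMin π = π x :=
  Set.Nonempty.csInf_mem (s := {v : ℝ | ∃ x, v = π x}) ⟨_, Classical.arbitrary X, rfl⟩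
    ((Set.finite_range π).subset fun _ ⟨x, hv⟩ => ⟨x, hv.symm⟩)

section MatPow

variable {X : Type*} [Fintype X] [DecidableEq X] {K : X → X → ℝ}

lemma matPow_nonneg (hK : IsStochastic K) (n : ℕ) (x y : X) : 0 ≤ matPow K n x y := by
  induction n generalizing y with
  | zero => simp only [matPow]; positivity
  | succ n ih => exact sum_nonneg fun z _ => mul_nonneg (ih z) (hK.1 z y).1

lemma exists_of_matPow_succ_pos (hK : IsStochastic K) {n : ℕ} {x y : X}
    (h : 0 < matPow K (n + 1) x y) : ∃ z, 0 < matPow K n x z ∧ 0 < K z y := by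
  obtain ⟨z, -, hz⟩ := (sum_pos_iff_of_nonneg fun z _ =>
    mul_nonneg (matPow_nonneg hK n x z) (hK.1 z y).1).1 h
  exact ⟨z, pos_of_mul_pos_left hz (hK.1 z y).1, pos_of_mul_pos_right hz (matPow_nonneg hK n x z)⟩

lemma minEntry_pow_le_matPow [Nonempty X] (hK : IsStochastic K) {n : ℕ} {x y : X}
    (h : 0 < matPow K n x y) : minEntry K ^ n ≤ matPow K n x y := by
  induction n generalizing y with
  | zero =>
    by_cases hxy : x = y
    · simp [matPow, hxy]
    · simp [matPow, hxy] at h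
  | succ n ih =>
    obtain ⟨z, hxz, hzy⟩ := exists_of_matPow_succ_pos hK h
    calc minEntry K ^ (n + 1) = minEntry K ^ n * minEntry K := pow_succ _ _
      _ ≤ matPow K n x z * K z y :=
        mul_le_mul (ih hxz) (minEntry_le_of_pos hzy) (minEntry_pos hK).le hxz.le
      _ ≤ ∑ w, matPow K n x w * K w y :=
        single_le_sum (fun w _ => mul_nonneg (matPow_nonneg hK n x w) (hK.1 w y).1) (mem_univ z)

lemma sum_mul_matPow_of_isStationaryVec {π : X → ℝ} (hπ : IsStationaryVec K π) (n : ℕ) (y : X) :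
    ∑ x, π x * matPow K n x y = π y := by
  induction n generalizing y with
  | zero => simp [matPow]
  | succ n ih =>
    calc ∑ x, π x * ∑ z, matPow K n x z * K z y
        = ∑ z, (∑ x, π x * matPow K n x z) * K z y := by
          simp only [mul_sum, sum_mul, mul_assoc]
          exact sum_comm
      _ = π y := by simp only [ih]; exact hπ.2.2 y

end MatPow

section Distance

variable {X : Type*} [Fintype X] [DecidableEq X] {K : X → X → ℝ}

lemma matPow_mdist_pos (hirr : IsIrreducibleMatrix K) (x y : X) :
    0 < matPow K (mdist K x y) x y :=
  Nat.sInf_mem (hirr x y)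

lemma mdist_le_mdiam (K : X → X → ℝ) (x y : X) : mdist K x y ≤ mdiam K :=
  le_sup (f := fun p : X × X => mdist K p.1 p.2) (mem_univ (x, y))

lemma card_ball_le (hK : IsStochastic K) (hirr : IsIrreducibleMatrix K) (x : X) (k : ℕ) :
    (#{y | mdist K x y ≤ k} : ℝ) ≤ (1 + 1 / minEntry K) ^ k := by
  have : Nonempty X := ⟨x⟩
  induction k with
  | zero =>
    have hball : ({y | mdist K x y ≤ 0} : Finset X) ⊆ {x} := by
      intro y hy
      have hpos := matPow_mdist_pos hirr x y
      rw [Nat.le_zero.1 (mem_filter.1 hy).2] at hpos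
      by_cases hxy : x = y
      · simp [hxy]
      · simp [matPow, hxy] at hpos
    simpa using card_le_card hball
  | succ k ih =>
    set B : Finset X := {y | mdist K x y ≤ k}
    have hball : ({y | mdist K x y ≤ k + 1} : Finset X) ⊆
        B.biUnion fun z => insert z ({y | 0 < K z y} : Finset X) := by
      intro y hy
      rcases (Nat.le_succ_iff.1 (mem_filter.1 hy).2) with hyk | hyk
      · exact mem_biUnion.2 ⟨y, mem_filter.2 ⟨mem_univ y, hyk⟩, mem_insert_self y _⟩
      · have hpos := matPow_mdist_pos hirr x y
        rw [hyk] at hpos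
        obtain ⟨z, hxz, hzy⟩ := exists_of_matPow_succ_pos hK hpos
        exact mem_biUnion.2 ⟨z, mem_filter.2 ⟨mem_univ z, Nat.sInf_le hxz⟩,
          mem_insert_of_mem (mem_filter.2 ⟨mem_univ y, hzy⟩)⟩
    have hrow (z : X) : (#(insert z ({y | 0 < K z y} : Finset X)) : ℝ) ≤ 1 + 1 / minEntry K :=
      calc (#(insert z ({y | 0 < K z y} : Finset X)) : ℝ) ≤ 1 + #{y | 0 < K z y} := by
            rw [add_comm]; exact_mod_cast card_insert_le _ _
        _ ≤ 1 + 1 / minEntry K := by gcongr; exact card_filter_pos_le_inv_minEntry hK z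
    calc (#{y | mdist K x y ≤ k + 1} : ℝ)
        ≤ ∑ z ∈ B, (#(insert z ({y | 0 < K z y} : Finset X)) : ℝ) := by
          exact_mod_cast (card_le_card hball).trans card_biUnion_le
      _ ≤ #B * (1 + 1 / minEntry K) := by
          rw [← nsmul_eq_mul, ← sum_const]
          exact sum_le_sum fun z _ => hrow z
      _ ≤ (1 + 1 / minEntry K) ^ k * (1 + 1 / minEntry K) := by
          gcongr
          exact add_nonneg zero_le_one (one_div_nonneg.2 (minEntry_pos hK).le)
      _ = (1 + 1 / minEntry K) ^ (k + 1) := (pow_succ _ _).symm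

lemma card_le_inv_minEntry_pow_two_mul_mdiam (hK : IsStochastic K) (hirr : IsIrreducibleMatrix K)
    (hδ : minEntry K ≤ 1 / 2) [Nonempty X] :
    (Fintype.card X : ℝ) ≤ (1 / minEntry K) ^ (2 * mdiam K) := by
  obtain ⟨x⟩ := ‹Nonempty X›
  have hball : ({y | mdist K x y ≤ mdiam K} : Finset X) = univ :=
    filter_true_of_mem fun y _ => mdist_le_mdiam K x y
  have hinv : 2 ≤ 1 / minEntry K := by rw [le_div_iff₀ (minEntry_pos hK)]; linarith
  calc (Fintype.card X : ℝ) = #{y | mdist K x y ≤ mdiam K} := by rw [hball, card_univ]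
    _ ≤ (1 + 1 / minEntry K) ^ mdiam K := card_ball_le hK hirr x _
    _ ≤ ((1 / minEntry K) ^ 2) ^ mdiam K := by gcongr; nlinarith
    _ = (1 / minEntry K) ^ (2 * mdiam K) := (pow_mul _ _ _).symm

lemma mul_minEntry_pow_mdiam_le {π : X → ℝ} (hK : IsStochastic K) (hirr : IsIrreducibleMatrix K)
    (hπ : IsStationaryVec K π) (x y : X) : π x * minEntry K ^ mdiam K ≤ π y := by
  have : Nonempty X := ⟨x⟩
  have hpath := matPow_mdist_pos hirr x y
  calc π x * minEntry K ^ mdiam K ≤ π x * minEntry K ^ mdist K x y :=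
        mul_le_mul_of_nonneg_left (pow_le_pow_of_le_one (minEntry_pos hK).le (minEntry_le_one hK)
          (mdist_le_mdiam K x y)) (hπ.1 x).le
    _ ≤ π x * matPow K (mdist K x y) x y :=
        mul_le_mul_of_nonneg_left (minEntry_pow_le_matPow hK hpath) (hπ.1 x).le
    _ ≤ ∑ z, π z * matPow K (mdist K x y) z y :=
        single_le_sum (fun z _ => mul_nonneg (hπ.1 z).le (matPow_nonneg hK _ z y)) (mem_univ x)
    _ = π y := sum_mul_matPow_of_isStationaryVec hπ _ y

lemma minEntry_pow_three_mul_mdiam_le_statMin {π : X → ℝ} (hK : IsStochastic K)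
    (hirr : IsIrreducibleMatrix K) (hπ : IsStationaryVec K π) (hδ : minEntry K ≤ 1 / 2) :
    minEntry K ^ (3 * mdiam K) ≤ statMin π := by
  have := hπ.nonempty
  have hcard : (0 : ℝ) < Fintype.card X := by exact_mod_cast Fintype.card_pos
  obtain ⟨x, -, hx⟩ : ∃ x ∈ univ, 1 / (Fintype.card X : ℝ) ≤ π x := by
    refine exists_le_of_sum_le univ_nonempty ?_
    rw [sum_const, card_univ, nsmul_eq_mul, hπ.2.1, mul_one_div_cancel hcard.ne']
  obtain ⟨y, hy⟩ := exists_statMin_eq π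
  have hδ0 := minEntry_pos hK (K := K)
  have hsmall : minEntry K ^ (2 * mdiam K) ≤ 1 / (Fintype.card X : ℝ) := by
    rw [le_one_div (by positivity) hcard, ← one_div_pow]
    exact card_le_inv_minEntry_pow_two_mul_mdiam hK hirr hδ
  calc minEntry K ^ (3 * mdiam K) = minEntry K ^ (2 * mdiam K) * minEntry K ^ mdiam K := by
        rw [← pow_add]; ring_nf
    _ ≤ π x * minEntry K ^ mdiam K := by gcongr; exact hsmall.trans hx
    _ ≤ statMin π := hy ▸ mul_minEntry_pow_mdiam_le hK hirr hπ x y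

end Distance

theorem stmt_6_general {X : Type*} [Fintype X] [DecidableEq X]
    (K : X → X → ℝ) (π : X → ℝ)
    (hK : IsStochastic K) (hirr : IsIrreducibleMatrix K) (hπ : IsStationaryVec K π)
    (hδ : minEntry K ≤ 1 / 2) :
    Real.log (1 / statMin π) ≤
      3 * (mdiam K : ℝ) * Real.log (1 / minEntry K) := by
  have := hπ.nonempty
  have hp := minEntry_pow_three_mul_mdiam_le_statMin hK hirr hπ hδ
  have hlog := Real.log_le_log (pow_pos (minEntry_pos hK) _) hp
  rw [Real.log_pow] at hlog
  rw [one_div, one_div, Real.log_inv, Real.log_inv]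
  push_cast at hlog
  linarith

/-- Control on the minimal stationary probability. -/
theorem stmt_6 {X : Type*} [Fintype X] [DecidableEq X]
    (hcard : 2 ≤ Fintype.card X)
    (K : X → X → ℝ) (π : X → ℝ)
    (hK : IsStochastic K) (hirr : IsIrreducibleMatrix K) (hπ : IsStationaryVec K π)
    (hsym : SymmSupport K)
    (hδ : minEntry K ≤ 1 / 2) :
    Real.log (1 / statMin π) ≤
      3 * (mdiam K : ℝ) * Real.log (1 / minEntry K) :=
  stmt_6_general K π hK hirr hπ hδ
end
end

section
/- For all real numbers u, v with 0 < u ≤ v and v > 1, the inequality u · log u ≤ (v log v / (v − 1)) · max(u − 1, 0) holds. -/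
open scoped Classical

noncomputable section

/-- `x log x / (x - 1)` is the slope of the chord from `1` to `x` of the convex function `x log x`. -/
lemma monotoneOn_mul_log_div_sub_one :
    MonotoneOn (fun x : ℝ ↦ x * Real.log x / (x - 1)) (Set.Ioi 1) := by
  intro x (hx : 1 < x) y (hy : 1 < y) hxy
  have := Real.convexOn_mul_log.secant_mono (a := 1) (by simp) (by simp; linarith)
    (by simp; linarith) hx.ne' hy.ne' hxy
  simpa using this

theorem stmt_14_general (u v : ℝ) (hu : 0 < u) (huv : u ≤ v) :
    u * Real.log u ≤ v * Real.log v / (v - 1) * max (u - 1) 0 := by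
  rcases le_or_gt u 1 with hu1 | hu1
  · rw [max_eq_right (by linarith), mul_zero]
    exact Real.mul_log_nonpos hu.le hu1
  · rw [max_eq_left (by linarith)]
    calc u * Real.log u = u * Real.log u / (u - 1) * (u - 1) := by field_simp
      _ ≤ v * Real.log v / (v - 1) * (u - 1) := by
        gcongr ?_ * _
        exact monotoneOn_mul_log_div_sub_one hu1 (hu1.trans_le huv) huv

/-- Elementary inequality behind the reversed Pinsker inequality. -/
theorem stmt_14 (u v : ℝ) (hu : 0 < u) (huv : u ≤ v) (hv : 1 < v) :
    u * Real.log u ≤ v * Real.log v / (v - 1) * max (u - 1) 0 :=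
  stmt_14_general u v hu huv
end
end

section
/- Let μ be a probability vector on 𝒳 and θ > 0, and set p = min_x π(x) ∈ (0,1). Then the upper and lower tails of the likelihood ratio satisfy: Σ_{x : μ(x)/π(x) ≥ p^{−θ}} μ(x) ≤ d_KL(μ,π) / (θ log(1/p) + p^{θ} − 1), and Σ_{x : 0 < μ(x)/π(x) ≤ p^{θ}} μ(x) ≤ d_KL(μ,π) / (p^{−θ} − θ log(1/p) − 1). -/
open scoped Classical

noncomputable section

/-!
With `F(u) = log u + 1/u - 1` one has `μ F(μ/π) = μ log(μ/π) + π - μ` wherever `μ > 0`, so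
summing gives `∑ μ F(μ/π) ≤ dKL μ π`. Since `F ≥ 0` on `(0, ∞)`, decreasing on `(0, 1]` and
increasing on `[1, ∞)`, Markov's inequality bounds the `μ`-mass of `{μ/π ≥ p^(-θ)}` by
`dKL μ π / F(p^(-θ))` and that of `{0 < μ/π ≤ p^θ}` by `dKL μ π / F(p^θ)`; these are the two
denominators of the statement, positive because `p^(±θ) ≠ 1`.
-/

open Finset

def logAddInvSubOne (u : ℝ) : ℝ := Real.log u + u⁻¹ - 1

lemma logAddInvSubOne_nonneg {u : ℝ} (hu : 0 < u) : 0 ≤ logAddInvSubOne u := by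
  have := Real.one_sub_inv_le_log_of_pos hu
  unfold logAddInvSubOne
  linarith

lemma logAddInvSubOne_pos {u : ℝ} (hu : 0 < u) (hne : u ≠ 1) : 0 < logAddInvSubOne u := by
  have := Real.log_lt_sub_one_of_pos (inv_pos.2 hu) (inv_ne_one.2 hne)
  rw [Real.log_inv] at this
  unfold logAddInvSubOne
  linarith

/-- `F` decreases on `(0, 1]` and increases on `[1, ∞)`; both are this one inequality. -/
lemma logAddInvSubOne_le_of_mul_nonneg {t u : ℝ} (ht : 0 < t) (hu : 0 < u)
    (h : 0 ≤ (u - t) * (t - 1)) : logAddInvSubOne t ≤ logAddInvSubOne u := by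
  have hlog : 1 - t / u ≤ Real.log u - Real.log t := by
    rw [← Real.log_div hu.ne' ht.ne']
    simpa using Real.one_sub_inv_le_log_of_pos (div_pos hu ht)
  have hgap : (1 - t / u) + u⁻¹ - t⁻¹ = (u - t) * (t - 1) / (u * t) := by
    field_simp
    ring
  have : 0 ≤ (1 - t / u) + u⁻¹ - t⁻¹ := hgap ▸ by positivity
  unfold logAddInvSubOne
  linarith

lemma logAddInvSubOne_monotoneOn : MonotoneOn logAddInvSubOne (Set.Ici 1) :=
  fun _ ht _ _ htu => logAddInvSubOne_le_of_mul_nonneg (zero_lt_one.trans_le ht)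
    (zero_lt_one.trans_le (ht.trans htu)) (mul_nonneg (sub_nonneg.2 htu) (sub_nonneg.2 ht))

lemma logAddInvSubOne_antitoneOn : AntitoneOn logAddInvSubOne (Set.Ioc 0 1) :=
  fun _ hu _ ht hut => logAddInvSubOne_le_of_mul_nonneg ht.1 hu.1
    (mul_nonneg_of_nonpos_of_nonpos (sub_nonpos.2 hut) (sub_nonpos.2 ht.2))

lemma logAddInvSubOne_rpow {p : ℝ} (hp : 0 < p) (t : ℝ) :
    logAddInvSubOne (p ^ t) = t * Real.log p + p ^ (-t) - 1 := by
  rw [logAddInvSubOne, Real.log_rpow hp, ← Real.rpow_neg hp.le]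

lemma mul_logAddInvSubOne_div_le {a b : ℝ} (ha : 0 ≤ a) (hb : 0 < b) :
    a * logAddInvSubOne (a / b) ≤ a * Real.log (a / b) + (b - a) := by
  rcases ha.eq_or_lt with h | h
  · simp [← h, hb.le]
  · have : a * (a / b)⁻¹ = b := by field_simp
    rw [logAddInvSubOne, mul_sub, mul_add, this]
    linarith

section Markov

variable {X : Type*} [Fintype X] {μ π : X → ℝ}

lemma sum_mul_logAddInvSubOne_le_dKL (hμ : ∀ x, 0 ≤ μ x) (hπ : ∀ x, 0 < π x)
    (hsum : ∑ x, π x ≤ ∑ x, μ x) :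
    ∑ x, μ x * logAddInvSubOne (μ x / π x) ≤ dKL μ π :=
  calc ∑ x, μ x * logAddInvSubOne (μ x / π x)
      ≤ ∑ x, (μ x * Real.log (μ x / π x) + (π x - μ x)) :=
        sum_le_sum fun x _ => mul_logAddInvSubOne_div_le (hμ x) (hπ x)
    _ = dKL μ π + (∑ x, π x - ∑ x, μ x) := by rw [sum_add_distrib, sum_sub_distrib, dKL]
    _ ≤ dKL μ π := by linarith

lemma sum_le_dKL_div_of_le_logAddInvSubOne (hμ : ∀ x, 0 ≤ μ x) (hπ : ∀ x, 0 < π x)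
    (hsum : ∑ x, π x ≤ ∑ x, μ x) {s : Finset X} {c : ℝ} (hc : 0 < c)
    (hs : ∀ x ∈ s, c ≤ logAddInvSubOne (μ x / π x)) :
    ∑ x ∈ s, μ x ≤ dKL μ π / c := by
  have hterm_nonneg : ∀ x, 0 ≤ μ x * logAddInvSubOne (μ x / π x) := fun x => by
    rcases (hμ x).eq_or_lt with h | h
    · simp [← h]
    · exact mul_nonneg h.le (logAddInvSubOne_nonneg (div_pos h (hπ x)))
  rw [le_div_iff₀ hc]
  calc (∑ x ∈ s, μ x) * c = ∑ x ∈ s, μ x * c := sum_mul _ _ _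
    _ ≤ ∑ x ∈ s, μ x * logAddInvSubOne (μ x / π x) :=
        sum_le_sum fun x hx => mul_le_mul_of_nonneg_left (hs x hx) (hμ x)
    _ ≤ ∑ x, μ x * logAddInvSubOne (μ x / π x) :=
        sum_le_sum_of_subset_of_nonneg (subset_univ s) fun x _ _ => hterm_nonneg x
    _ ≤ dKL μ π := sum_mul_logAddInvSubOne_le_dKL hμ hπ hsum

lemma sum_filter_le_div_le_dKL_div {t : ℝ} (hμ : ∀ x, 0 ≤ μ x) (hπ : ∀ x, 0 < π x)
    (hsum : ∑ x, π x ≤ ∑ x, μ x) (ht : 1 < t) :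
    ∑ x ∈ univ.filter (fun x => t ≤ μ x / π x), μ x ≤ dKL μ π / logAddInvSubOne t := by
  refine sum_le_dKL_div_of_le_logAddInvSubOne hμ hπ hsum
    (logAddInvSubOne_pos (by linarith) ht.ne') fun x hx => ?_
  have htx : t ≤ μ x / π x := (mem_filter.1 hx).2
  exact logAddInvSubOne_monotoneOn ht.le (ht.le.trans htx) htx

lemma sum_filter_div_le_le_dKL_div {t : ℝ} (hμ : ∀ x, 0 ≤ μ x) (hπ : ∀ x, 0 < π x)
    (hsum : ∑ x, π x ≤ ∑ x, μ x) (ht₀ : 0 < t) (ht : t < 1) :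
    ∑ x ∈ univ.filter (fun x => 0 < μ x / π x ∧ μ x / π x ≤ t), μ x ≤
      dKL μ π / logAddInvSubOne t := by
  refine sum_le_dKL_div_of_le_logAddInvSubOne hμ hπ hsum
    (logAddInvSubOne_pos ht₀ ht.ne) fun x hx => ?_
  obtain ⟨hx₀, hxt⟩ := (mem_filter.1 hx).2
  exact logAddInvSubOne_antitoneOn ⟨hx₀, hxt.trans ht.le⟩ ⟨ht₀, ht.le⟩ hxt

end Markov

section StatMin

variable {X : Type*} [Fintype X] {π : X → ℝ}

lemma statMin_mem_range [Nonempty X] : statMin π ∈ Set.range π := by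
  have hS : {v : ℝ | ∃ x, v = π x} = Set.range π := by
    ext v
    simp [eq_comm]
  rw [statMin, hS]
  exact (Set.range_nonempty π).csInf_mem (Set.finite_range π)

lemma statMin_pos [Nonempty X] (hπ : ∀ x, 0 < π x) : 0 < statMin π := by
  obtain ⟨x, hx⟩ := statMin_mem_range (π := π)
  exact hx ▸ hπ x

lemma statMin_lt_one (hcard : 2 ≤ Fintype.card X) (hπ : ∀ x, 0 < π x)
    (hπ₁ : ∑ x, π x = 1) : statMin π < 1 := by
  have : Nonempty X := Fintype.card_pos_iff.mp (by omega)
  obtain ⟨x, hx⟩ := statMin_mem_range (π := π)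
  obtain ⟨y, hyx⟩ := Fintype.exists_ne_of_one_lt_card (by omega) x
  rw [← hx, ← hπ₁]
  exact single_lt_sum hyx (mem_univ x) (mem_univ y) (hπ y) fun z _ _ => (hπ z).le

end StatMin

theorem stmt_15_general {X : Type*} [Fintype X]
    (hcard : 2 ≤ Fintype.card X)
    (K : X → X → ℝ) (π : X → ℝ)
    (hπ : IsStationaryVec K π)
    (μ : X → ℝ) (hμ : IsProbVector μ)
    (θ : ℝ) (hθ : 0 < θ) :
    (∑ x ∈ Finset.univ.filter (fun x => statMin π ^ (-θ) ≤ μ x / π x), μ x) ≤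
        dKL μ π / (θ * Real.log (1 / statMin π) + statMin π ^ θ - 1) ∧
    (∑ x ∈ Finset.univ.filter (fun x => 0 < μ x / π x ∧ μ x / π x ≤ statMin π ^ θ), μ x) ≤
        dKL μ π / (statMin π ^ (-θ) - θ * Real.log (1 / statMin π) - 1) := by
  obtain ⟨hπ_pos, hπ₁, -⟩ := hπ
  have : Nonempty X := Fintype.card_pos_iff.mp (by omega)
  have hp₀ := statMin_pos hπ_pos
  have hp₁ := statMin_lt_one hcard hπ_pos hπ₁
  have hsum : ∑ x, π x ≤ ∑ x, μ x := by rw [hπ₁, hμ.2]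
  have hlog : Real.log (1 / statMin π) = -Real.log (statMin π) := by rw [one_div, Real.log_inv]
  have hupper : θ * Real.log (1 / statMin π) + statMin π ^ θ - 1 =
      logAddInvSubOne (statMin π ^ (-θ)) := by
    rw [logAddInvSubOne_rpow hp₀, neg_neg, hlog]
    ring
  have hlower : statMin π ^ (-θ) - θ * Real.log (1 / statMin π) - 1 =
      logAddInvSubOne (statMin π ^ θ) := by
    rw [logAddInvSubOne_rpow hp₀, hlog]
    ring
  rw [hupper, hlower]
  exact ⟨sum_filter_le_div_le_dKL_div hμ.1 hπ_pos hsum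
      (Real.one_lt_rpow_of_pos_of_lt_one_of_neg hp₀ hp₁ (neg_neg_of_pos hθ)),
    sum_filter_div_le_le_dKL_div hμ.1 hπ_pos hsum (Real.rpow_pos_of_pos hp₀ θ)
      (Real.rpow_lt_one hp₀.le hp₁ hθ)⟩

/-- Tail bounds on the likelihood ratio via Markov's inequality. -/
theorem stmt_15 {X : Type*} [Fintype X] [DecidableEq X]
    (hcard : 2 ≤ Fintype.card X)
    (K : X → X → ℝ) (π : X → ℝ)
    (hK : IsStochastic K) (hirr : IsIrreducibleMatrix K) (hπ : IsStationaryVec K π)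
    (μ : X → ℝ) (hμ : IsProbVector μ)
    (θ : ℝ) (hθ : 0 < θ) :
    (∑ x ∈ Finset.univ.filter (fun x => statMin π ^ (-θ) ≤ μ x / π x), μ x) ≤
        dKL μ π / (θ * Real.log (1 / statMin π) + statMin π ^ θ - 1) ∧
    (∑ x ∈ Finset.univ.filter (fun x => 0 < μ x / π x ∧ μ x / π x ≤ statMin π ^ θ), μ x) ≤
        dKL μ π / (statMin π ^ (-θ) - θ * Real.log (1 / statMin π) - 1) :=
  stmt_15_general hcard K π hπ μ hμ θ hθ
end
end
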